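/- Kummer's quadratic transformation: for T in a neighborhood of 0 (with 4T(1−T) in the disc of convergence), 2F1(μ/2, (1−μ)/2; 1; 4T(1−T)) = 2F1(μ, 1−μ; 1; T). -/

import Mathlib

/-!
Expanding `(4T(1-T))ⁿ = ∑ₖ C(n,k) 4ⁿ (-1)ᵏ Tⁿ⁺ᵏ` and regrouping by total degree, which absolute
convergence allows for small `T`, writes the left-hand side as a power series `∑ eₘ Tᵐ`.
The coefficients `eₘ` are finite sums; Zeilberger's algorithm gives a telescoping certificate
showing that they satisfy `(m+1)² eₘ₊₁ = (m+μ)(m+1-μ) eₘ`, the recurrence of the coefficients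
of `2F1(μ, 1-μ; 1; T)`, and `e₀ = 1`.
-/

/-- The Pochhammer rising factorial `(a)_n = a(a+1)⋯(a+n−1)`. -/
noncomputable def poch (a : ℝ) (n : ℕ) : ℝ := Polynomial.eval a (ascPochhammer ℝ n)

/-- The Gauss hypergeometric function `2F1(a,b;c;t) = ∑ (a)_n (b)_n/((c)_n n!) tⁿ`. -/
noncomputable def F21 (a b c : ℝ) (t : ℝ) : ℝ :=
  ∑' n : ℕ, poch a n * poch b n / (poch c n * (Nat.factorial n : ℝ)) * t ^ n

open Finset Nat

lemma poch_zero (a : ℝ) : poch a 0 = 1 := by simp [poch]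

lemma poch_succ (a : ℝ) (n : ℕ) : poch a (n + 1) = poch a n * (a + n) := by
  simp [poch, ascPochhammer_succ_eval]

lemma poch_one (n : ℕ) : poch 1 n = n ! := by simp [poch]

lemma abs_poch_le (a : ℝ) (n : ℕ) : |poch a n| ≤ n ! * (|a| + 1) ^ n := by
  induction n with
  | zero => simp [poch_zero]
  | succ n ih =>
    have h : |a + n| ≤ (|a| + 1) * (n + 1) := by
      have := abs_add_le a n
      rw [Nat.abs_cast] at this
      nlinarith [abs_nonneg a]
    calc |poch a (n + 1)| = |poch a n| * |a + n| := by rw [poch_succ, abs_mul]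
      _ ≤ (n ! * (|a| + 1) ^ n) * ((|a| + 1) * (n + 1)) := by gcongr
      _ = (n + 1)! * (|a| + 1) ^ (n + 1) := by push_cast [factorial_succ]; ring

noncomputable def hypCoeff (a b : ℝ) (n : ℕ) : ℝ := poch a n * poch b n / (n ! : ℝ) ^ 2

lemma F21_one (a b t : ℝ) : F21 a b 1 t = ∑' n, hypCoeff a b n * t ^ n := by
  simp only [F21, hypCoeff, poch_one, sq]

lemma hypCoeff_zero (a b : ℝ) : hypCoeff a b 0 = 1 := by simp [hypCoeff, poch_zero]

lemma hypCoeff_succ (a b : ℝ) (n : ℕ) :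
    ((n : ℝ) + 1) ^ 2 * hypCoeff a b (n + 1) = (n + a) * (n + b) * hypCoeff a b n := by
  have : (n ! : ℝ) ≠ 0 := by positivity
  rw [hypCoeff, hypCoeff, poch_succ, poch_succ, factorial_succ]
  push_cast
  field_simp
  ring

lemma abs_hypCoeff_le (a b : ℝ) (n : ℕ) : |hypCoeff a b n| ≤ ((|a| + 1) * (|b| + 1)) ^ n := by
  have : (0 : ℝ) < n ! := by positivity
  rw [hypCoeff, abs_div, abs_mul, abs_of_pos (pow_pos this 2), div_le_iff₀ (by positivity)]
  calc |poch a n| * |poch b n| ≤ (n ! * (|a| + 1) ^ n) * (n ! * (|b| + 1) ^ n) := by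
        gcongr <;> exact abs_poch_le _ n
    _ = ((|a| + 1) * (|b| + 1)) ^ n * (n ! : ℝ) ^ 2 := by rw [mul_pow]; ring

theorem Summable.tsum_eq_tsum_sum_antidiagonal {f : ℕ × ℕ → ℝ} (hf : Summable f) :
    ∑' p, f p = ∑' n, ∑ p ∈ antidiagonal n, f p := by
  rw [← HasAntidiagonal.sigmaAntidiagonalEquivProd.tsum_eq f]
  exact ((HasAntidiagonal.sigmaAntidiagonalEquivProd.summable_iff.2 hf).tsum_sigma'
    fun _ => .of_finite).trans (tsum_congr fun n => Finset.tsum_subtype _ f)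

section BinomialDoubleSeries

variable (c : ℕ → ℝ) (x y : ℝ)

noncomputable def binomTerm (p : ℕ × ℕ) : ℝ := c p.1 * p.1.choose p.2 * x ^ p.1 * y ^ p.2

lemma hasSum_binomTerm_row (n : ℕ) :
    HasSum (fun k => binomTerm c x y (n, k)) (c n * (x * (1 + y)) ^ n) := by
  have h : c n * (x * (1 + y)) ^ n = ∑ k ∈ range (n + 1), binomTerm c x y (n, k) := by
    rw [add_comm 1 y, mul_pow, add_pow, mul_sum, mul_sum]
    refine sum_congr rfl fun k _ => ?_
    simp only [binomTerm, one_pow, mul_one]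
    ring
  rw [h]
  refine hasSum_sum_of_ne_finset_zero fun k hk => ?_
  rw [binomTerm, choose_eq_zero_of_lt (by simpa using hk)]
  simp

lemma abs_binomTerm (p : ℕ × ℕ) :
    |binomTerm c x y p| = binomTerm (fun n => |c n|) |x| |y| p := by
  simp [binomTerm, abs_mul, abs_pow]

variable {c x y}

lemma summable_binomTerm {K : ℝ} (hc : ∀ n, |c n| ≤ K ^ n) (h : K * |x| * (1 + |y|) < 1) :
    Summable (binomTerm c x y) := by
  have hK : 0 ≤ K := (abs_nonneg _).trans (by simpa using hc 1)
  refine Summable.of_abs ?_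
  simp_rw [abs_binomTerm]
  refine (summable_prod_of_nonneg fun p => abs_binomTerm c x y p ▸ abs_nonneg _).2
    ⟨fun n => (hasSum_binomTerm_row _ _ _ n).summable, ?_⟩
  refine (summable_geometric_of_lt_one (by positivity) h).of_nonneg_of_le
    (fun n => tsum_nonneg fun k => abs_binomTerm c x y (n, k) ▸ abs_nonneg _) fun n => ?_
  rw [(hasSum_binomTerm_row _ _ _ n).tsum_eq, mul_assoc, mul_pow K]
  gcongr
  exact hc n

theorem tsum_mul_pow_eq_tsum_sum_antidiagonal_binomTerm {K : ℝ} (hc : ∀ n, |c n| ≤ K ^ n)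
    (h : K * |x| * (1 + |y|) < 1) :
    ∑' n, c n * (x * (1 + y)) ^ n = ∑' m, ∑ p ∈ antidiagonal m, binomTerm c x y p := by
  have hs := summable_binomTerm hc h
  rw [← hs.tsum_eq_tsum_sum_antidiagonal]
  exact (hs.hasSum.prod_fiberwise (hasSum_binomTerm_row c x y)).tsum_eq

end BinomialDoubleSeries

noncomputable def quadTerm (c : ℕ → ℝ) (m k : ℕ) : ℝ :=
  (-1) ^ k * 4 ^ (m - k) * (m - k).choose k * c (m - k)

/-- The coefficient of `T ^ m` in `∑ₙ c n (4T(1-T))ⁿ`. -/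
noncomputable def quadCoeff (c : ℕ → ℝ) (m : ℕ) : ℝ := ∑ k ∈ range (m + 1), quadTerm c m k

lemma sum_antidiagonal_binomTerm_four_mul_neg (c : ℕ → ℝ) (T : ℝ) (m : ℕ) :
    ∑ p ∈ antidiagonal m, binomTerm c (4 * T) (-T) p = quadCoeff c m * T ^ m := by
  rw [← Nat.sum_antidiagonal_swap, Nat.sum_antidiagonal_eq_sum_range_succ_mk, quadCoeff, sum_mul]
  refine sum_congr rfl fun k hk => ?_
  have hkm : m - k + k = m := Nat.sub_add_cancel (by simpa [Nat.lt_succ_iff] using hk)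
  simp only [Prod.swap_prod_mk, binomTerm, quadTerm, neg_eq_neg_one_mul T, mul_pow]
  rw [← hkm, pow_add, Nat.add_sub_cancel]
  ring

theorem tsum_mul_quad_pow {c : ℕ → ℝ} {K T : ℝ} (hc : ∀ n, |c n| ≤ K ^ n)
    (hT : 4 * K * |T| * (1 + |T|) < 1) :
    ∑' n, c n * (4 * T * (1 - T)) ^ n = ∑' m, quadCoeff c m * T ^ m := by
  have h : K * |4 * T| * (1 + |-T|) < 1 := by
    rwa [abs_neg, abs_mul, abs_of_pos four_pos, ← mul_assoc, mul_comm K]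
  simp_rw [← sum_antidiagonal_binomTerm_four_mul_neg,
    ← tsum_mul_pow_eq_tsum_sum_antidiagonal_binomTerm hc h, ← sub_eq_add_neg]

lemma cast_choose_succ_right_mul (n k : ℕ) :
    ((k : ℝ) + 1) * n.choose (k + 1) = (n - k) * n.choose k := by
  have h1 := congrArg (Nat.cast (R := ℝ)) (add_one_mul_choose_eq n k)
  have h2 := congrArg (Nat.cast (R := ℝ)) (choose_succ_succ' n k)
  push_cast at h1 h2
  linear_combination -((k : ℝ) + 1) * h2 - h1

lemma cast_succ_sub_mul_choose_succ (n k : ℕ) :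
    ((n : ℝ) + 1 - k) * (n + 1).choose k = (n + 1) * n.choose k := by
  have h1 := cast_choose_succ_right_mul (n + 1) k
  have h2 := congrArg (Nat.cast (R := ℝ)) (add_one_mul_choose_eq n k)
  push_cast at h1 h2
  linear_combination -h1 - h2

lemma quadTerm_eq_zero (c : ℕ → ℝ) {m k : ℕ} (h : m < 2 * k) : quadTerm c m k = 0 := by
  simp [quadTerm, choose_eq_zero_of_lt (by omega : m - k < k)]

section Recurrence

variable {c : ℕ → ℝ} {μ : ℝ}
  (hc : ∀ n : ℕ, ((n : ℝ) + 1) ^ 2 * c (n + 1) = (n + μ / 2) * (n + (1 - μ) / 2) * c n)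
include hc

/-- The right-hand side is a Zeilberger certificate: it telescopes when summed over `k`. -/
lemma quadTerm_succ_sub (m k : ℕ) (hk : k ≤ m + 1) :
    ((m : ℝ) + 1) ^ 2 * quadTerm c (m + 1) k - (m + μ) * (m + 1 - μ) * quadTerm c m k
      = (k + 1) * (2 * (k + 1) - 3 * m - 3) * quadTerm c (m + 1) (k + 1)
        - k * (2 * k - 3 * m - 3) * quadTerm c (m + 1) k := by
  rcases Nat.lt_or_ge m k with hmk | hkm
  · obtain rfl : k = m + 1 := by omega
    rw [quadTerm_eq_zero c (by omega : m + 1 < 2 * (m + 1 + 1)),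
      quadTerm_eq_zero c (by omega : m < 2 * (m + 1)),
      quadTerm_eq_zero c (by omega : m + 1 < 2 * (m + 1))]
    ring
  obtain ⟨n, rfl⟩ := Nat.exists_eq_add_of_le hkm
  simp only [quadTerm, show k + n + 1 - k = n + 1 by omega, show k + n - k = n by omega,
    show k + n + 1 - (k + 1) = n by omega]
  push_cast
  linear_combination (-1 : ℝ) ^ k * 4 ^ n *
    (4 * (n + 1) * c (n + 1) * cast_succ_sub_mul_choose_succ n k + 4 * n.choose k * hc n
      - (3 * n + k + 1) * c n * cast_choose_succ_right_mul n k)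

lemma quadCoeff_succ (m : ℕ) :
    ((m : ℝ) + 1) ^ 2 * quadCoeff c (m + 1) = (m + μ) * (m + 1 - μ) * quadCoeff c m := by
  have hm : quadCoeff c m = ∑ k ∈ range (m + 2), quadTerm c m k := by
    rw [sum_range_succ, quadTerm_eq_zero c (by omega : m < 2 * (m + 1)), add_zero, quadCoeff]
  rw [← sub_eq_zero, quadCoeff, hm, mul_sum, mul_sum, ← sum_sub_distrib,
    sum_congr rfl fun k hk => quadTerm_succ_sub hc m k (by simpa [Nat.lt_succ_iff] using hk)]
  have htelescope :=
    sum_range_sub (fun j : ℕ => j * (2 * j - 3 * m - 3) * quadTerm c (m + 1) j) (m + 2)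
  push_cast at htelescope
  rw [htelescope]
  simp [quadTerm_eq_zero c (by omega : m + 1 < 2 * (m + 2))]

end Recurrence

lemma quadCoeff_zero (c : ℕ → ℝ) : quadCoeff c 0 = c 0 := by simp [quadCoeff, quadTerm]

lemma quadCoeff_hypCoeff (μ : ℝ) :
    quadCoeff (hypCoeff (μ / 2) ((1 - μ) / 2)) = hypCoeff μ (1 - μ) := by
  funext m
  induction m with
  | zero => rw [quadCoeff_zero, hypCoeff_zero, hypCoeff_zero]
  | succ m ih =>
    refine mul_left_cancel₀ (by positivity : ((m : ℝ) + 1) ^ 2 ≠ 0) ?_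
    rw [quadCoeff_succ (hypCoeff_succ _ _) m, hypCoeff_succ, ih]
    ring

/-- Kummer's quadratic transformation: for `T` in a neighborhood of `0`,
`2F1(μ/2, (1−μ)/2; 1; 4T(1−T)) = 2F1(μ, 1−μ; 1; T)`. -/
theorem kummer_quadratic_transformation (μ : ℝ) :
    ∃ ε > (0 : ℝ), ∀ T : ℝ, |T| < ε →
      F21 (μ/2) ((1 - μ)/2) 1 (4 * T * (1 - T)) = F21 μ (1 - μ) 1 T := by
  set K := (|μ / 2| + 1) * (|(1 - μ) / 2| + 1)
  have hK : 1 ≤ K := one_le_mul_of_one_le_of_one_le (by simp) (by simp)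
  refine ⟨1 / (8 * K), by positivity, fun T hT => ?_⟩
  have hsmall : 4 * K * |T| * (1 + |T|) < 1 := by
    rw [lt_div_iff₀ (by positivity)] at hT
    nlinarith [abs_nonneg T]
  rw [F21_one, F21_one, tsum_mul_quad_pow (abs_hypCoeff_le _ _) hsmall, quadCoeff_hypCoeff]
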